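/- arXiv:2101.12324 — 2 statements merged into one kernel-verified Lean document; each statement's English description precedes it below -/
import Mathlib

section
/- Let f be a proper convex function on ℝ^d and ξ a point in the relative interior of the effective domain of f. If the subdifferential ∂f(ξ) is contained in a hyperplane {h ∈ ℝ^d : h·ξ = b} for some b ∈ ℝ, then the one-variable function t ↦ f(tξ) is differentiable at t = 1 (with derivative b). -/
/-!
Write `D v = f'(ξ; v)` for the one-sided directional derivative. On the direction space `V` of the
affine span of the domain, `D` is finite (ξ is a relative interior point) and sublinear, so by
Hahn–Banach every value `c` with `-D(-ξ) ≤ c ≤ D ξ` is attained as `h·ξ` by some subgradient `h`.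
The hypothesis forces all these values to equal `b`, i.e. the left derivative `-D(-ξ)` and the right
derivative `D ξ` of `t ↦ f(tξ)` at `t = 1` coincide. If `ξ ∉ V`, the line through `0` and `ξ` meets
the domain only at `ξ`, so the derivative statement is vacuous.
-/

open Set Filter Topology

section

variable {E : Type*} [AddCommGroup E] [Module ℝ E]

theorem exists_linearMap_le_sublinear_apply_eq (N : E → ℝ)
    (N_hom : ∀ c : ℝ, 0 < c → ∀ x, N (c • x) = c * N x)
    (N_add : ∀ x y, N (x + y) ≤ N x + N y) {v : E} {c : ℝ} (hc₁ : -N (-v) ≤ c) (hc₂ : c ≤ N v) :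
    ∃ φ : E →ₗ[ℝ] ℝ, (∀ x, φ x ≤ N x) ∧ φ v = c := by
  have N_zero : N 0 = 0 := by
    have := N_hom 2 two_pos 0
    rw [smul_zero] at this
    linarith
  have le_N : ∀ a : ℝ, a * c ≤ N (a • v) := by
    intro a
    rcases lt_trichotomy a 0 with ha | rfl | ha
    · rw [← neg_smul_neg, N_hom _ (neg_pos.2 ha)]
      nlinarith
    · simp [N_zero]
    · rw [N_hom _ ha]
      exact mul_le_mul_of_nonneg_left hc₂ ha.le
  have hker : ∀ a : ℝ, a • v = 0 → a • c = 0 := by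
    intro a hav
    rcases smul_eq_zero.1 hav with rfl | rfl
    · exact zero_smul _ _
    · rw [neg_zero, N_zero] at hc₁
      rw [N_zero] at hc₂
      rw [le_antisymm hc₂ (by linarith), smul_zero]
  set F : E →ₗ.[ℝ] ℝ := LinearPMap.mkSpanSingleton' v c hker
  have hF : ∀ z : F.domain, F z ≤ N z := by
    rintro ⟨z, hz⟩
    obtain ⟨a, rfl⟩ := Submodule.mem_span_singleton.1 hz
    rw [LinearPMap.mkSpanSingleton'_apply]
    exact le_N a
  obtain ⟨φ, hφF, hφN⟩ := exists_extension_of_le_sublinear F N N_hom N_add hF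
  refine ⟨φ, hφN, ?_⟩
  exact (hφF ⟨v, Submodule.mem_span_singleton_self v⟩).trans
    (LinearPMap.mkSpanSingleton'_apply_self _ _ _ _)

/-- The right derivative of `t ↦ f (x + t • v)` at `0`, i.e. `f'(x; v)`; it is `0` (a junk value)
when that one-sided derivative does not exist. -/
noncomputable def rightLineDeriv (f : E → ℝ) (x v : E) : ℝ :=
  derivWithin (fun t : ℝ => f (x + t • v)) (Ioi 0) 0

variable {f : E → ℝ} {s : Set E} {x v w : E}

theorem ConvexOn.comp_add_smul (hf : ConvexOn ℝ s f) (x v : E) :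
    ConvexOn ℝ {t : ℝ | x + t • v ∈ s} (fun t => f (x + t • v)) :=
  (hf.translate_right x).comp_linearMap (LinearMap.toSpanSingleton ℝ E v)

theorem ConvexOn.hasDerivWithinAt_rightLineDeriv (hf : ConvexOn ℝ s f)
    (hv : {t : ℝ | x + t • v ∈ s} ∈ 𝓝 0) :
    HasDerivWithinAt (fun t : ℝ => f (x + t • v)) (rightLineDeriv f x v) (Ioi 0) 0 :=
  (hf.comp_add_smul x v).hasDerivWithinAt_rightDeriv_of_mem_interior
    (mem_interior_iff_mem_nhds.2 hv)

theorem ConvexOn.rightLineDeriv_le_sub (hf : ConvexOn ℝ s f)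
    (hv : {t : ℝ | x + t • v ∈ s} ∈ 𝓝 0) (hxv : x + v ∈ s) :
    rightLineDeriv f x v ≤ f (x + v) - f x := by
  have := (hf.comp_add_smul x v).rightDeriv_le_slope (mem_of_mem_nhds hv) (by simpa using hxv)
    one_pos (hf.hasDerivWithinAt_rightLineDeriv hv).differentiableWithinAt
  simpa [rightLineDeriv, slope_def_field] using this

theorem ConvexOn.rightLineDeriv_smul (hf : ConvexOn ℝ s f)
    (hv : {t : ℝ | x + t • v ∈ s} ∈ 𝓝 0) {c : ℝ} (hc : 0 < c) :
    rightLineDeriv f x (c • v) = c * rightLineDeriv f x v := by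
  have := (hf.hasDerivWithinAt_rightLineDeriv hv).comp_of_eq (0 : ℝ)
    ((hasDerivAt_mul_const c).hasDerivWithinAt (s := Ioi 0))
    (fun _ ht => mul_pos ht hc) (zero_mul c).symm
  have hcomp : (fun t : ℝ => f (x + t • c • v)) = (fun t : ℝ => f (x + t • v)) ∘ (· * c) := by
    ext t
    simp [smul_smul]
  rw [mul_comm, rightLineDeriv, hcomp]
  exact this.derivWithin (uniqueDiffWithinAt_Ioi 0)

theorem ConvexOn.rightLineDeriv_add_le (hf : ConvexOn ℝ s f)
    (hv : {t : ℝ | x + t • v ∈ s} ∈ 𝓝 0) (hw : {t : ℝ | x + t • w ∈ s} ∈ 𝓝 0)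
    (hvw : {t : ℝ | x + t • (v + w) ∈ s} ∈ 𝓝 0) :
    rightLineDeriv f x (v + w) ≤ rightLineDeriv f x v + rightLineDeriv f x w := by
  have hdouble_nhds : Tendsto (fun t : ℝ => 2 * t) (𝓝 0) (𝓝 0) := by
    simpa using (continuous_const_mul (2 : ℝ)).tendsto 0
  have hdouble : Tendsto (fun t : ℝ => 2 * t) (𝓝[>] 0) (𝓝[>] 0) :=
    tendsto_nhdsWithin_of_tendsto_nhds_of_eventually_within _
      (hdouble_nhds.mono_left nhdsWithin_le_nhds)
      (eventually_mem_nhdsWithin.mono fun _ ht => mem_Ioi.2 (mul_pos two_pos ht))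
  have slope_tendsto : ∀ {u : E}, {t : ℝ | x + t • u ∈ s} ∈ 𝓝 0 →
      Tendsto (slope (fun t : ℝ => f (x + t • u)) 0) (𝓝[>] 0) (𝓝 (rightLineDeriv f x u)) :=
    fun hu => (hasDerivWithinAt_iff_tendsto_slope' self_notMem_Ioi).1
      (hf.hasDerivWithinAt_rightLineDeriv hu)
  refine le_of_tendsto_of_tendsto (slope_tendsto hvw)
    (((slope_tendsto hv).comp hdouble).add ((slope_tendsto hw).comp hdouble)) ?_
  filter_upwards [self_mem_nhdsWithin, nhdsWithin_le_nhds (hdouble_nhds hv),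
    nhdsWithin_le_nhds (hdouble_nhds hw)] with t (ht : 0 < t) hvt hwt
  have hmid := hf.2 hvt hwt (by norm_num : (0 : ℝ) ≤ 1 / 2) (by norm_num : (0 : ℝ) ≤ 1 / 2)
    (by norm_num)
  have hpoint : (1 / 2 : ℝ) • (x + (2 * t) • v) + (1 / 2 : ℝ) • (x + (2 * t) • w)
      = x + t • (v + w) := by module
  rw [hpoint, smul_eq_mul, smul_eq_mul] at hmid
  simp only [Function.comp_apply, slope_def_field, zero_smul, add_zero, sub_zero]
  rw [← add_div, div_le_div_iff₀ ht (by positivity)]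
  nlinarith

theorem ConvexOn.neg_rightLineDeriv_neg_le (hf : ConvexOn ℝ s f)
    (hv : {t : ℝ | x + t • v ∈ s} ∈ 𝓝 0) (hnv : {t : ℝ | x + t • -v ∈ s} ∈ 𝓝 0) :
    -rightLineDeriv f x (-v) ≤ rightLineDeriv f x v := by
  have hx : x ∈ s := by simpa using mem_of_mem_nhds hv
  have h0 : {t : ℝ | x + t • (v + -v) ∈ s} ∈ 𝓝 0 := univ_mem' fun t => by simpa using hx
  have := hf.rightLineDeriv_add_le hv hnv h0
  have hzero : rightLineDeriv f x 0 = 0 := by simp [rightLineDeriv]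
  rw [add_neg_cancel, hzero] at this
  linarith

theorem ConvexOn.exists_linearMap_subgradient (hf : ConvexOn ℝ s f) {V : Submodule ℝ E}
    (hsV : ∀ y ∈ s, y - x ∈ V) (hV : ∀ u ∈ V, {t : ℝ | x + t • u ∈ s} ∈ 𝓝 0) (hv : v ∈ V)
    {c : ℝ} (hc₁ : -rightLineDeriv f x (-v) ≤ c) (hc₂ : c ≤ rightLineDeriv f x v) :
    ∃ φ : E →ₗ[ℝ] ℝ, (∀ y ∈ s, f x + φ (y - x) ≤ f y) ∧ φ v = c := by
  obtain ⟨W, hW⟩ := V.exists_isCompl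
  set π := V.projection W hW
  have hπ : ∀ u ∈ V, π u = u := fun u hu => V.projection_apply_left hW ⟨u, hu⟩
  have hπV : ∀ u, {t : ℝ | x + t • π u ∈ s} ∈ 𝓝 0 := fun u => hV _ (V.projection_apply_mem hW u)
  -- `u ↦ f'(x; π u)` is a sublinear majorant on all of `E` that agrees with `f'(x; ·)` on `V`.
  obtain ⟨φ, hφN, hφv⟩ := exists_linearMap_le_sublinear_apply_eq
    (fun u => rightLineDeriv f x (π u))
    (fun a ha u => by simpa only [map_smul] using hf.rightLineDeriv_smul (hπV u) ha)
    (fun u u' => by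
      simpa only [map_add] using
        hf.rightLineDeriv_add_le (hπV u) (hπV u') (by simpa using hπV (u + u')))
    (v := v) (by simpa [hπ v hv] using hc₁) (by simpa [hπ v hv] using hc₂)
  refine ⟨φ, fun y hy => ?_, hφv⟩
  have hyx := hsV y hy
  have hle := hf.rightLineDeriv_le_sub (hV _ hyx) (by simpa using hy)
  have hφ := hφN (y - x)
  rw [hπ _ hyx] at hφ
  rw [add_sub_cancel] at hle
  linarith

theorem ConvexOn.hasDerivAt_of_rightLineDeriv_eq (hf : ConvexOn ℝ s f)
    (hv : {t : ℝ | x + t • v ∈ s} ∈ 𝓝 0) (hnv : {t : ℝ | x + t • -v ∈ s} ∈ 𝓝 0) {b : ℝ}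
    (hright : rightLineDeriv f x v = b) (hleft : rightLineDeriv f x (-v) = -b) :
    HasDerivAt (fun t : ℝ => f (x + t • v)) b 0 := by
  have hIoi : HasDerivWithinAt (fun t : ℝ => f (x + t • v)) b (Ioi 0) 0 :=
    hright ▸ hf.hasDerivWithinAt_rightLineDeriv hv
  have hneg : HasDerivWithinAt (fun t : ℝ => f (x + t • -v)) (-b) (Ioi 0) 0 :=
    hleft ▸ hf.hasDerivWithinAt_rightLineDeriv hnv
  have hIio := hneg.comp_of_eq (0 : ℝ) ((hasDerivAt_neg (0 : ℝ)).hasDerivWithinAt (s := Iio 0))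
    (fun _ ht => neg_pos.2 ht) neg_zero.symm
  have hcomp : (fun t : ℝ => f (x + t • -v)) ∘ Neg.neg = fun t : ℝ => f (x + t • v) := by
    ext t
    simp
  rw [hcomp, neg_mul_neg, mul_one] at hIio
  rw [hasDerivAt_iff_tendsto_slope_left_right]
  exact ⟨(hasDerivWithinAt_iff_tendsto_slope' self_notMem_Iio).1 hIio,
    (hasDerivWithinAt_iff_tendsto_slope' self_notMem_Ioi).1 hIoi⟩

end

theorem setOf_add_smul_mem_mem_nhds_of_mem_intrinsicInterior {E : Type*} [AddCommGroup E]
    [Module ℝ E] [TopologicalSpace E] [IsTopologicalAddGroup E] [ContinuousSMul ℝ E]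
    {s : Set E} {x v : E} (hx : x ∈ intrinsicInterior ℝ s) (hv : v ∈ (affineSpan ℝ s).direction) :
    {t : ℝ | x + t • v ∈ s} ∈ 𝓝 0 := by
  obtain ⟨y, hy, rfl⟩ := mem_intrinsicInterior.1 hx
  have hmem : ∀ t : ℝ, (y : E) + t • v ∈ affineSpan ℝ s := fun t => by
    simpa [add_comm] using
      AffineSubspace.vadd_mem_of_mem_direction ((affineSpan ℝ s).direction.smul_mem t hv) y.2
  let line : ℝ → affineSpan ℝ s := fun t => ⟨y + t • v, hmem t⟩
  have hline : Continuous line := by fun_prop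
  have hline0 : line 0 = y := by ext; simp [line]
  exact hline.continuousAt.preimage_mem_nhds (hline0 ▸ mem_interior_iff_mem_nhds.1 hy)

theorem eq_one_of_smul_mem_of_notMem_direction {E : Type*} [AddCommGroup E] [Module ℝ E]
    {s : Set E} {x : E} {t : ℝ} (hx : x ∈ s) (hxV : x ∉ (affineSpan ℝ s).direction)
    (htx : t • x ∈ s) : t = 1 := by
  by_contra ht
  have hmem : (t - 1) • x ∈ (affineSpan ℝ s).direction := by
    rw [direction_affineSpan, sub_smul, one_smul]
    exact vsub_mem_vectorSpan ℝ htx hx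
  exact hxV ((Submodule.smul_mem_iff _ (sub_ne_zero.2 ht)).1 hmem)

/-- If `f` is convex on `s ⊆ ℝ^d`, `ξ` lies in the relative (intrinsic) interior of `s`,
and the subdifferential `∂f(ξ) = {h : ∀ ζ ∈ s, f ξ + h·(ζ−ξ) ≤ f ζ}` is contained in
the hyperplane `{h : h·ξ = b}`, then `t ↦ f(tξ)` is differentiable at `t = 1`
(within the set of `t` with `tξ ∈ s`), with derivative `b`. -/
theorem stmt4 (d : ℕ) (f : (Fin d → ℝ) → ℝ) (s : Set (Fin d → ℝ))
    (hconv : ConvexOn ℝ s f) (ξ : Fin d → ℝ) (hξ : ξ ∈ intrinsicInterior ℝ s) (b : ℝ)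
    (hsub : ∀ h : Fin d → ℝ,
      (∀ ζ ∈ s, f ξ + (∑ i, h i * (ζ i - ξ i)) ≤ f ζ) → (∑ i, h i * ξ i) = b) :
    HasDerivWithinAt (fun t : ℝ => f (t • ξ)) b {t : ℝ | t • ξ ∈ s} 1 := by
  have hξs : ξ ∈ s := intrinsicInterior_subset hξ
  set V := (affineSpan ℝ s).direction
  by_cases hξV : ξ ∉ V
  · have hisolated : {t : ℝ | t • ξ ∈ s} \ {1} = ∅ :=
      Set.sdiff_eq_empty.2 fun t ht => eq_one_of_smul_mem_of_notMem_direction hξs hξV ht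
    refine HasFDerivWithinAt.of_not_accPt ?_
    rw [accPt_principal_iff_nhdsWithin, hisolated, nhdsWithin_empty]
    exact fun h => h.ne rfl
  rw [not_not] at hξV
  have hV : ∀ v ∈ V, {t : ℝ | ξ + t • v ∈ s} ∈ 𝓝 0 := fun v hv =>
    setOf_add_smul_mem_mem_nhds_of_mem_intrinsicInterior hξ hv
  have hsV : ∀ y ∈ s, y - ξ ∈ V := fun y hy =>
    AffineSubspace.vsub_mem_direction (subset_affineSpan ℝ s hy) (subset_affineSpan ℝ s hξs)
  have hb : ∀ c, -rightLineDeriv f ξ (-ξ) ≤ c → c ≤ rightLineDeriv f ξ ξ → c = b := by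
    intro c hc₁ hc₂
    obtain ⟨φ, hφ, rfl⟩ := hconv.exists_linearMap_subgradient hsV hV hξV hc₁ hc₂
    obtain ⟨h, hφh⟩ : ∃ h : Fin d → ℝ, ∀ z, φ z = ∑ i, h i * z i :=
      ⟨fun i => φ fun j => if i = j then 1 else 0, fun z => by
        simp [φ.pi_apply_eq_sum_univ z, mul_comm]⟩
    rw [hφh]
    exact hsub h fun ζ hζ => by simpa [hφh] using hφ ζ hζ
  have hle := hconv.neg_rightLineDeriv_neg_le (hV ξ hξV) (hV _ (V.neg_mem hξV))
  have hline := hconv.hasDerivAt_of_rightLineDeriv_eq (hV ξ hξV) (hV _ (V.neg_mem hξV))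
    (hb _ hle le_rfl) (by linarith [hb _ le_rfl hle])
  have hshift := HasDerivAt.comp_sub_const (1 : ℝ) 1 (by rw [sub_self]; exact hline)
  have hreparam : (fun t : ℝ => f (ξ + (t - 1) • ξ)) = fun t => f (t • ξ) := by
    ext t
    congr 1
    module
  exact (hreparam ▸ hshift).hasDerivWithinAt
end

section
/- Let x ∈ ℤ^d with |x|₁ = n and let π be a nearest-neighbor lattice path from 0 to x. Define level j of N-cubes as the collection {S(k) : |k|₁ = j} where S(k) = Nk + [0,N)^d ∩ ℤ^d. Then the path π enters and exits at least one N-cube at each level 0, 1, …, m₀, where m₀ ≥ n/N − (d+1). -/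
/-!
Index the cubes by `k = ⌊y / N⌋` coordinatewise and call `∑ |kᵢ|` the level of `y`. Floor
division by `N` is 1-Lipschitz, so a nearest-neighbour step raises the level by at most one.
The path starts at level `0` and ends at the level `L` of `x`, where `|x|₁ ≤ N L + d (N - 1)`.
Hence for every `j < L` there is a time `s < M` at which the path sits in a cube of level `j`,
and it has left that cube by time `M` because `x` lies at level `L ≠ j`. Take `m₀ = L - 1`.
-/

open Finset

theorem Int.abs_ediv_sub_ediv_le {N : ℤ} (hN : 0 < N) (a b : ℤ) : |a / N - b / N| ≤ |a - b| := by
  wlog hba : b ≤ a generalizing a b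
  · rw [abs_sub_comm, abs_sub_comm a]
    exact this b a (le_of_not_ge hba)
  have hle : a / N ≤ b / N + (a - b) :=
    calc a / N ≤ (b + (a - b) * N) / N := Int.ediv_le_ediv hN (by nlinarith)
      _ = b / N + (a - b) := Int.add_mul_ediv_right _ _ hN.ne'
  rw [abs_of_nonneg (sub_nonneg.2 (Int.ediv_le_ediv hN hba)), abs_of_nonneg (sub_nonneg.2 hba)]
  linarith

theorem Int.abs_le_mul_abs_ediv_add {N : ℤ} (hN : 0 < N) (a : ℤ) : |a| ≤ N * |a / N| + (N - 1) := by
  have hlo := Int.ediv_mul_le a hN.ne'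
  have hhi := Int.lt_ediv_add_one_mul_self a hN
  rcases abs_cases a with ⟨ha, _⟩ | ⟨ha, _⟩ <;>
    rcases abs_cases (a / N) with ⟨hq, _⟩ | ⟨hq, _⟩ <;> nlinarith

theorem exists_lt_eq_of_le_of_lt {f : ℕ → ℤ} {M : ℕ} (hstep : ∀ i < M, f (i + 1) ≤ f i + 1)
    {j : ℤ} (h0 : f 0 ≤ j) (hM : j < f M) : ∃ s < M, f s = j := by
  induction M with
  | zero => omega
  | succ M ih =>
    by_cases hj : j < f M
    · obtain ⟨s, hs, hfs⟩ := ih (fun i hi => hstep i (by omega)) hj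
      exact ⟨s, by omega, hfs⟩
    · exact ⟨M, by omega, by linarith [hstep M (by omega)]⟩

namespace LatticeCube

variable {ι : Type*} {N : ℤ}

def cubeIndex (N : ℤ) (y : ι → ℤ) : ι → ℤ := fun i => y i / N

theorem cubeIndex_eq_iff (hN : 0 < N) {y k : ι → ℤ} :
    cubeIndex N y = k ↔ ∀ i, k i * N ≤ y i ∧ y i < k i * N + N := by
  simp only [funext_iff, cubeIndex, Int.ediv_eq_iff_of_pos hN]

variable [Fintype ι]

def level (N : ℤ) (y : ι → ℤ) : ℤ := ∑ i, |cubeIndex N y i|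

@[simp] theorem level_zero : level N (0 : ι → ℤ) = 0 := by
  simp [level, cubeIndex]

theorem level_le_level_add (hN : 0 < N) (y z : ι → ℤ) :
    level N y ≤ level N z + ∑ i, |y i - z i| := by
  simp only [level, cubeIndex, ← sum_add_distrib]
  refine sum_le_sum fun i _ => ?_
  linarith [abs_sub_abs_le_abs_sub (y i / N) (z i / N), Int.abs_ediv_sub_ediv_le hN (y i) (z i)]

theorem sum_abs_le_level (hN : 0 < N) (y : ι → ℤ) :
    ∑ i, |y i| ≤ N * level N y + Fintype.card ι * (N - 1) := by
  calc ∑ i, |y i| ≤ ∑ i, (N * |y i / N| + (N - 1)) :=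
        sum_le_sum fun i _ => Int.abs_le_mul_abs_ediv_add hN (y i)
    _ = N * level N y + Fintype.card ι * (N - 1) := by
        rw [sum_add_distrib, ← mul_sum, sum_const, card_univ, nsmul_eq_mul]
        rfl

end LatticeCube

open LatticeCube in
/-- A nearest-neighbor lattice path from `0` to `x` with `|x|₁ = n` enters and exits at
least one `N`-cube `S(k) = Nk + [0,N)^d` at each level `j ∈ {0,…,m₀}`, where the levels
are `{S(k) : |k|₁ = j}` and `m₀ ≥ n/N − (d+1)`. -/
theorem stmt16 (d N : ℕ) (hN : 0 < N) (x : Fin d → ℤ) (n : ℕ)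
    (hx : (∑ i, |x i|) = (n : ℤ)) (M : ℕ) (π : ℕ → (Fin d → ℤ))
    (h0 : π 0 = 0) (hM : π M = x)
    (hstep : ∀ i < M, (∑ j, |π (i + 1) j - π i j|) = 1) :
    ∃ m₀ : ℤ, (n : ℝ) / (N : ℝ) - ((d : ℝ) + 1) ≤ (m₀ : ℝ) ∧
      ∀ j : ℕ, (j : ℤ) ≤ m₀ →
        ∃ k : Fin d → ℤ, (∑ i, |k i|) = (j : ℤ) ∧
          ∃ s t : ℕ, s < t ∧ t ≤ M ∧
            (∀ i, k i * (N : ℤ) ≤ π s i ∧ π s i < k i * (N : ℤ) + (N : ℤ)) ∧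
            ¬ (∀ i, k i * (N : ℤ) ≤ π t i ∧ π t i < k i * (N : ℤ) + (N : ℤ)) := by
  have hNZ : (0 : ℤ) < N := by exact_mod_cast hN
  have hbound : (n : ℤ) ≤ N * (level N x + d) := by
    have := sum_abs_le_level hNZ x
    simp only [Fintype.card_fin] at this
    nlinarith
  refine ⟨level N x - 1, ?_, fun j hj => ?_⟩
  · have hNR : (0 : ℝ) < N := by exact_mod_cast hN
    have : (n : ℝ) ≤ N * (level N x + d) := by exact_mod_cast hbound
    rw [Int.cast_sub, Int.cast_one, sub_le_iff_le_add, div_le_iff₀ hNR]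
    linarith
  obtain ⟨s, hsM, hs⟩ : ∃ s < M, level N (π s) = j := by
    refine exists_lt_eq_of_le_of_lt (fun i hi => ?_) (by simp [h0]) (by rw [hM]; omega)
    simpa [hstep i hi] using level_le_level_add hNZ (π (i + 1)) (π i)
  refine ⟨cubeIndex N (π s), hs, s, M, hsM, le_rfl, (cubeIndex_eq_iff hNZ).1 rfl, fun hexit => ?_⟩
  rw [← cubeIndex_eq_iff hNZ, hM] at hexit
  have : level N x = j := by rw [level, hexit]; exact hs
  omega
end
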